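/- Let t₀ ∈ ℝ, T_p > 0, r a positive integer, 𝒯(t) = (T_p/(T_p + t₀ − t))^r on [t₀, t₀ + T_p), ρ₀ > 0, and ρ = ρ₀ + r/T_p. Suppose x : [t₀, t₀ + T_p) → ℝ is differentiable with ẋ(t) = −ρ 𝒯(t) x(t). Then for every t ∈ [t₀, t₀ + T_p), |x(t)| ≤ 𝒯(t)^{−1} · exp(−ρ₀ ∫_{t₀}^{t} 𝒯(τ) dτ) · |x(t₀)|. -/

import Mathlib

/-!
Multiplying by the integrating factor `exp (ρ ∫ 𝒯)` shows `x t = exp (-ρ ∫_{t₀}^t 𝒯) x t₀`.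
Splitting `ρ = ρ₀ + r / T_p`, it remains to see `𝒯 t ≤ exp ((r / T_p) ∫_{t₀}^t 𝒯)`. Both sides
equal `1` at `t₀`, and on logarithmic scale the derivative of the left side is
`r / (T_p + t₀ - t) = (r / T_p) 𝒯^{1/r} ≤ (r / T_p) 𝒯`, since `𝒯 ≥ 1`.
-/

open Set Real

/-- The time-scaling function `𝒯(t) = (T_p / (T_p + t₀ - t))^r`. -/
noncomputable def Tscale (t₀ Tp : ℝ) (r : ℕ) (t : ℝ) : ℝ := (Tp / (Tp + t₀ - t)) ^ r

theorem eq_mul_exp_of_hasDerivAt_neg_mul {x A a : ℝ → ℝ} {t₀ t : ℝ} (ht : t₀ ≤ t)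
    (hA : ∀ s ∈ Icc t₀ t, HasDerivAt A (a s) s)
    (hx : ∀ s ∈ Icc t₀ t, HasDerivAt x (-a s * x s) s) :
    x t = x t₀ * exp (-(A t - A t₀)) := by
  have hderiv : ∀ s ∈ Icc t₀ t, HasDerivAt (fun u => x u * exp (A u)) 0 s :=
    fun s hs => ((hx s hs).fun_mul (hA s hs).exp).congr_deriv (by ring)
  have hconst := constant_of_has_deriv_right_zero
    (fun s hs => (hderiv s hs).continuousAt.continuousWithinAt)
    (fun s hs => (hderiv s (Ico_subset_Icc_self hs)).hasDerivWithinAt) t ⟨ht, le_rfl⟩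
  rw [neg_sub, exp_sub, mul_div_assoc', ← hconst, mul_div_cancel_right₀ _ (exp_pos _).ne']

theorem ContinuousOn.hasDerivAt_integral_right {E : Type*} [NormedAddCommGroup E]
    [NormedSpace ℝ E] [CompleteSpace E] {f : ℝ → E} {U : Set ℝ} {a b : ℝ}
    (hf : ContinuousOn f U) (hU : IsOpen U) (hab : uIcc a b ⊆ U) :
    HasDerivAt (fun u => ∫ x in a..u, f x) (f b) b :=
  have hb : b ∈ U := hab right_mem_uIcc
  intervalIntegral.integral_hasDerivAt_right ((hf.mono hab).intervalIntegrable)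
    (hf.stronglyMeasurableAtFilter hU b hb) (hf.continuousAt (hU.mem_nhds hb))

section Tscale

variable {t₀ Tp : ℝ} {r : ℕ} {s : ℝ}

theorem Tscale_self (hTp : Tp ≠ 0) : Tscale t₀ Tp r t₀ = 1 := by
  simp [Tscale, hTp]

theorem Tscale_pos (hs : s ∈ Ico t₀ (t₀ + Tp)) : 0 < Tscale t₀ Tp r s := by
  have hden : 0 < Tp + t₀ - s := by linarith [hs.2]
  have hTp : 0 < Tp := by linarith [hs.1]
  unfold Tscale
  positivity

theorem continuousOn_Tscale : ContinuousOn (Tscale t₀ Tp r) (Iio (t₀ + Tp)) :=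
  (continuousOn_const.div (by fun_prop) fun s hs => by
    rw [mem_Iio] at hs; linarith).pow r

theorem hasDerivAt_integral_Tscale (hTp : 0 < Tp) (hs : s < t₀ + Tp) :
    HasDerivAt (fun u => ∫ τ in t₀..u, Tscale t₀ Tp r τ) (Tscale t₀ Tp r s) s :=
  continuousOn_Tscale.hasDerivAt_integral_right isOpen_Iio fun _ hu =>
    hu.2.trans_lt (max_lt (by linarith) hs)

theorem hasDerivAt_log_Tscale (hTp : Tp ≠ 0) (hs : s < t₀ + Tp) :
    HasDerivAt (fun u => log (Tscale t₀ Tp r u)) (r / (Tp + t₀ - s)) s := by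
  have hden : Tp + t₀ - s ≠ 0 := by linarith
  have hlog : (fun u => log (Tscale t₀ Tp r u)) = fun u => r * log (Tp / (Tp + t₀ - u)) := by
    funext u
    simp only [Tscale, log_pow]
  rw [hlog]
  refine ((((hasDerivAt_const s Tp).fun_div ((hasDerivAt_id' s).const_sub (Tp + t₀)) hden).log
    (div_ne_zero hTp hden)).const_mul (r : ℝ)).congr_deriv ?_
  field_simp
  ring

theorem div_le_mul_Tscale (hs : s ∈ Ico t₀ (t₀ + Tp)) :
    (r : ℝ) / (Tp + t₀ - s) ≤ r / Tp * Tscale t₀ Tp r s := by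
  have hden : 0 < Tp + t₀ - s := by linarith [hs.2]
  have hTp : 0 < Tp := by linarith [hs.1]
  have hq : 1 ≤ Tp / (Tp + t₀ - s) := by
    rw [one_le_div hden]
    linarith [hs.1]
  calc (r : ℝ) / (Tp + t₀ - s) = r / Tp * (Tp / (Tp + t₀ - s)) := by field_simp
    _ ≤ r / Tp * Tscale t₀ Tp r s := by
      rcases r.eq_zero_or_pos with rfl | hr
      · simp
      · exact mul_le_mul_of_nonneg_left (le_self_pow₀ hq hr.ne') (by positivity)

theorem Tscale_le_exp_integral {t : ℝ} (ht : t ∈ Ico t₀ (t₀ + Tp)) :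
    Tscale t₀ Tp r t ≤ exp (r / Tp * ∫ τ in t₀..t, Tscale t₀ Tp r τ) := by
  have hTp : 0 < Tp := by linarith [ht.1, ht.2]
  have hIco : ∀ s ∈ Icc t₀ t, s ∈ Ico t₀ (t₀ + Tp) := fun s hs => ⟨hs.1, hs.2.trans_lt ht.2⟩
  have hlog : ∀ s ∈ Icc t₀ t, HasDerivAt (fun u => log (Tscale t₀ Tp r u)) (r / (Tp + t₀ - s)) s :=
    fun s hs => hasDerivAt_log_Tscale hTp.ne' (hIco s hs).2
  have hint : ∀ s ∈ Icc t₀ t, HasDerivAt (fun u => r / Tp * ∫ τ in t₀..u, Tscale t₀ Tp r τ)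
      (r / Tp * Tscale t₀ Tp r s) s :=
    fun s hs => (hasDerivAt_integral_Tscale hTp (hIco s hs).2).const_mul _
  rw [← log_le_iff_le_exp (Tscale_pos ht)]
  refine image_le_of_deriv_right_le_deriv_boundary
    (fun s hs => (hlog s hs).continuousAt.continuousWithinAt)
    (fun s hs => (hlog s (Ico_subset_Icc_self hs)).hasDerivWithinAt) ?_
    (fun s hs => (hint s hs).continuousAt.continuousWithinAt)
    (fun s hs => (hint s (Ico_subset_Icc_self hs)).hasDerivWithinAt)
    (fun s hs => div_le_mul_Tscale (hIco s (Ico_subset_Icc_self hs))) ⟨ht.1, le_rfl⟩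
  simp [Tscale_self hTp.ne']

end Tscale

theorem single_integrator_solution_estimate_general
    (t₀ Tp : ℝ) (r : ℕ)
    (ρ₀ ρ : ℝ) (hρ : ρ = ρ₀ + (r : ℝ) / Tp)
    (x : ℝ → ℝ)
    (hx : ∀ t ∈ Set.Ico t₀ (t₀ + Tp),
      HasDerivAt x (-(ρ * Tscale t₀ Tp r t) * x t) t) :
    ∀ t ∈ Set.Ico t₀ (t₀ + Tp),
      |x t| ≤ (Tscale t₀ Tp r t)⁻¹
        * Real.exp (-ρ₀ * ∫ τ in t₀..t, Tscale t₀ Tp r τ) * |x t₀| := by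
  intro t ht
  have hTp : 0 < Tp := by linarith [ht.1, ht.2]
  set F : ℝ → ℝ := fun u => ∫ τ in t₀..u, Tscale t₀ Tp r τ
  have hsol : x t = x t₀ * exp (-(ρ * F t - ρ * F t₀)) :=
    eq_mul_exp_of_hasDerivAt_neg_mul ht.1
      (fun s hs => (hasDerivAt_integral_Tscale hTp (hs.2.trans_lt ht.2)).const_mul ρ)
      (fun s hs => hx s ⟨hs.1, hs.2.trans_lt ht.2⟩)
  have hF₀ : F t₀ = 0 := intervalIntegral.integral_same
  calc |x t| = exp (-ρ₀ * F t) * exp (-(r / Tp * F t)) * |x t₀| := by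
        rw [hsol, hF₀, abs_mul, abs_of_pos (exp_pos _), ← exp_add, hρ]
        ring_nf
    _ ≤ exp (-ρ₀ * F t) * (Tscale t₀ Tp r t)⁻¹ * |x t₀| := by
        rw [exp_neg]
        gcongr
        exacts [Tscale_pos ht, Tscale_le_exp_integral ht]
    _ = _ := by ring

/-- eq. (17) of the paper: the closed-loop single integrator
with gain `ρ = ρ₀ + r/T_p` satisfies
`|x(t)| ≤ 𝒯(t)⁻¹ exp(-ρ₀ ∫_{t₀}^{t} 𝒯) |x(t₀)|`. -/
theorem single_integrator_solution_estimate
    (t₀ Tp : ℝ) (hTp : 0 < Tp) (r : ℕ) (hr : 0 < r)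
    (ρ₀ ρ : ℝ) (hρ₀ : 0 < ρ₀) (hρ : ρ = ρ₀ + (r : ℝ) / Tp)
    (x : ℝ → ℝ)
    (hx : ∀ t ∈ Set.Ico t₀ (t₀ + Tp),
      HasDerivAt x (-(ρ * Tscale t₀ Tp r t) * x t) t) :
    ∀ t ∈ Set.Ico t₀ (t₀ + Tp),
      |x t| ≤ (Tscale t₀ Tp r t)⁻¹
        * Real.exp (-ρ₀ * ∫ τ in t₀..t, Tscale t₀ Tp r τ) * |x t₀| :=
  single_integrator_solution_estimate_general t₀ Tp r ρ₀ ρ hρ x hx
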